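/- arXiv:2005.04280 — 2 statements merged into one kernel-verified Lean document; each statement's English description precedes it below -/
import Mathlib

section
/- For every positive integer q and real X > 0, ∑_{d | q^∞} (1/d)(log(X/d) - γ) = (q/φ(q)) (log X - γ - ∑_{p | q} log(p)/(p-1)), where γ is the Euler–Mascheroni constant. -/
/-!
Every `d ∣ q^∞` factors uniquely as `p ^ e * n` with `n` built from the remaining primes of `q`,
so the sums `∑ 1 / d` and `∑ log d / d` over such `d` are assembled one prime at a time from
`∑ p⁻ᵉ = p / (p - 1)` and `∑ e p⁻ᵉ = p / (p - 1) ^ 2`. This gives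
`∑ 1 / d = ∏ p / (p - 1) = q / φ q` and `∑ log d / d = (q / φ q) ∑ log p / (p - 1)`,
and the theorem is the combination `log (X / d) - γ = (log X - γ) - log d`.
-/

open Finset

lemma HasSum.mul_of_nonneg {ι κ : Type*} {f : ι → ℝ} {g : κ → ℝ} {a b : ℝ}
    (hf : HasSum f a) (hg : HasSum g b) (hf₀ : 0 ≤ f) (hg₀ : 0 ≤ g) :
    HasSum (fun x : ι × κ => f x.1 * g x.2) (a * b) :=
  hf.mul hg (hf.summable.mul_of_nonneg hg.summable hf₀ hg₀)

namespace Nat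

lemma hasSum_inv_pow_of_prime {p : ℕ} (hp : p.Prime) :
    HasSum (fun e : ℕ => ((p : ℝ)⁻¹) ^ e) ((p : ℝ) / (p - 1)) := by
  have hp1 : (1 : ℝ) < p := by exact_mod_cast hp.one_lt
  convert hasSum_geometric_of_lt_one (by positivity) (inv_lt_one_of_one_lt₀ hp1) using 1
  field_simp

lemma hasSum_coe_mul_inv_pow_of_prime {p : ℕ} (hp : p.Prime) :
    HasSum (fun e : ℕ => (e : ℝ) * ((p : ℝ)⁻¹) ^ e) ((p : ℝ) / (p - 1) ^ 2) := by
  have hp1 : (1 : ℝ) < p := by exact_mod_cast hp.one_lt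
  have hnorm : ‖(p : ℝ)⁻¹‖ < 1 := by
    rw [norm_inv, norm_natCast]; exact inv_lt_one_of_one_lt₀ hp1
  have hp0 : (p : ℝ) - 1 ≠ 0 := by linarith
  have hval : (p : ℝ)⁻¹ / (1 - (p : ℝ)⁻¹) ^ 2 = p / (p - 1) ^ 2 := by
    field_simp
  simpa only [hval] using hasSum_coe_mul_geometric_of_norm_lt_one hnorm

lemma cast_equivProdNatFactoredNumbers {s : Finset ℕ} {p : ℕ} (hp : p.Prime) (hs : p ∉ s)
    (x : ℕ × factoredNumbers s) :
    ((equivProdNatFactoredNumbers hp hs x : ℕ) : ℝ) = (p : ℝ) ^ x.1 * (x.2 : ℕ) := by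
  rw [equivProdNatFactoredNumbers_apply']
  push_cast
  rfl

lemma one_le_cast_factoredNumbers {s : Finset ℕ} (d : factoredNumbers s) :
    (1 : ℝ) ≤ (d : ℕ) := by
  exact_mod_cast one_le_iff_ne_zero.mpr d.2.1

lemma hasSum_factoredNumbers_empty (f : ℕ → ℝ) :
    HasSum (fun d : factoredNumbers ∅ => f d) (f 1) := by
  rw [factoredNumbers_empty]
  exact hasSum_singleton 1 f

theorem hasSum_one_div_factoredNumbers {S : Finset ℕ} (hS : ∀ p ∈ S, p.Prime) :
    HasSum (fun d : factoredNumbers S => 1 / (d : ℝ)) (∏ p ∈ S, (p : ℝ) / (p - 1)) := by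
  induction S using Finset.induction_on with
  | empty => simpa using hasSum_factoredNumbers_empty fun n => 1 / (n : ℝ)
  | insert p s hps IH =>
    have hp := hS p (mem_insert_self p s)
    rw [← (equivProdNatFactoredNumbers hp hps).hasSum_iff, prod_insert hps]
    refine ((hasSum_inv_pow_of_prime hp).mul_of_nonneg
      (IH fun q hq => hS q (mem_insert_of_mem hq)) (fun _ => by positivity)
      (fun _ => by positivity)).congr_fun fun x => ?_
    simp only [Function.comp_apply, cast_equivProdNatFactoredNumbers, one_div, mul_inv, inv_pow]

theorem hasSum_log_div_factoredNumbers {S : Finset ℕ} (hS : ∀ p ∈ S, p.Prime) :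
    HasSum (fun d : factoredNumbers S => Real.log d / d)
      ((∏ p ∈ S, (p : ℝ) / (p - 1)) * ∑ p ∈ S, Real.log p / (p - 1)) := by
  induction S using Finset.induction_on with
  | empty => simpa using hasSum_factoredNumbers_empty fun n => Real.log n / n
  | insert p s hps IH =>
    have hp := hS p (mem_insert_self p s)
    have hs : ∀ q ∈ s, q.Prime := fun q hq => hS q (mem_insert_of_mem hq)
    have hp1 : (1 : ℝ) < p := by exact_mod_cast hp.one_lt
    have hp1' : (p : ℝ) - 1 ≠ 0 := by linarith
    have hlog_div_nonneg (d : factoredNumbers s) : 0 ≤ Real.log d / d :=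
      div_nonneg (Real.log_nonneg (one_le_cast_factoredNumbers d))
        (by linarith [one_le_cast_factoredNumbers d])
    -- `log (p ^ e * n) / (p ^ e * n) = log p * (e * p⁻¹ ^ e) * (1 / n) + p⁻¹ ^ e * log n / n`
    have hsplit := (((hasSum_coe_mul_inv_pow_of_prime hp).mul_of_nonneg
      (hasSum_one_div_factoredNumbers hs) (fun _ => by positivity)
      (fun _ => by positivity)).mul_left (Real.log p)).add
      ((hasSum_inv_pow_of_prime hp).mul_of_nonneg (IH hs) (fun _ => by positivity) hlog_div_nonneg)
    have hvalue (P L : ℝ) : Real.log p * (p / (p - 1) ^ 2 * P) + p / (p - 1) * (P * L) =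
        p / (p - 1) * P * (Real.log p / (p - 1) + L) := by
      field_simp
    rw [← (equivProdNatFactoredNumbers hp hps).hasSum_iff, prod_insert hps, sum_insert hps,
      ← hvalue]
    refine hsplit.congr_fun fun x => ?_
    have hx : ((x.2 : ℕ) : ℝ) ≠ 0 := (one_pos.trans_le (one_le_cast_factoredNumbers x.2)).ne'
    have hpx : (p : ℝ) ^ x.1 ≠ 0 := (pow_pos (by linarith) _).ne'
    rw [Function.comp_apply, cast_equivProdNatFactoredNumbers, Real.log_mul hpx hx, Real.log_pow,
      inv_pow]
    field_simp

lemma prod_primeFactors_div_sub_one {n : ℕ} (hn : n ≠ 0) :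
    ∏ p ∈ n.primeFactors, (p : ℝ) / (p - 1) = n / φ n := by
  have hφ : (φ n : ℝ) ≠ 0 := by exact_mod_cast (totient_pos.mpr (pos_of_ne_zero hn)).ne'
  have hsub : ∏ p ∈ n.primeFactors, ((p : ℝ) - 1) ≠ 0 :=
    prod_ne_zero_iff.mpr fun p hp => sub_ne_zero.mpr
      (by exact_mod_cast (prime_of_mem_primeFactors hp).one_lt.ne')
  have key : (φ n : ℝ) * ∏ p ∈ n.primeFactors, (p : ℝ) =
      n * ∏ p ∈ n.primeFactors, ((p : ℝ) - 1) := by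
    have := congrArg (Nat.cast : ℕ → ℝ) (totient_mul_prod_primeFactors n)
    push_cast [prod_congr rfl fun p hp => cast_sub (prime_of_mem_primeFactors hp).one_lt.le] at this
    exact this
  rw [prod_div_distrib, div_eq_div_iff hsub hφ]
  linear_combination key

lemma mem_factoredNumbers_primeFactors {n : ℕ} (hn : n ≠ 0) {d : ℕ} :
    (0 < d ∧ ∀ p : ℕ, p.Prime → p ∣ d → p ∣ n) ↔
      d ∈ factoredNumbers n.primeFactors := by
  rw [mem_factoredNumbers_iff_primeFactors_subset, pos_iff_ne_zero]
  refine and_congr_right fun hd => ⟨fun h p hp => ?_, fun h p hp hpd => ?_⟩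
  · have hp' := prime_of_mem_primeFactors hp
    exact mem_primeFactors.mpr ⟨hp', h p hp' (dvd_of_mem_primeFactors hp), hn⟩
  · exact dvd_of_mem_primeFactors (h (mem_primeFactors.mpr ⟨hp, hpd, hd⟩))

end Nat

theorem stmt_3 (q : ℕ) (hq : 0 < q) (X : ℝ) (hX : 0 < X) :
    ∑' d : {d : ℕ // 0 < d ∧ ∀ p : ℕ, p.Prime → p ∣ d → p ∣ q},
        (1 / ((d : ℕ) : ℝ)) * (Real.log (X / (d : ℕ)) - Real.eulerMascheroniConstant) =
      ((q : ℝ) / q.totient) *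
        (Real.log X - Real.eulerMascheroniConstant -
          ∑ p ∈ q.primeFactors, Real.log p / (p - 1)) := by
  have hS : ∀ p ∈ q.primeFactors, p.Prime := fun p => Nat.prime_of_mem_primeFactors
  set c := Real.log X - Real.eulerMascheroniConstant
  have hsum := ((Nat.hasSum_one_div_factoredNumbers hS).mul_right c).sub
    (Nat.hasSum_log_div_factoredNumbers hS)
  rw [← (Equiv.subtypeEquivRight fun d : ℕ =>
      Nat.mem_factoredNumbers_primeFactors hq.ne').hasSum_iff,
    Nat.prod_primeFactors_div_sub_one hq.ne', ← mul_sub] at hsum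
  refine (hsum.congr_fun fun d => ?_).tsum_eq
  have hd : ((d : ℕ) : ℝ) ≠ 0 := by exact_mod_cast d.2.1.ne'
  simp only [Function.comp_apply, Equiv.subtypeEquivRight_apply_coe, Real.log_div hX.ne' hd]
  ring
end

section
/- Let q and v be positive integers and s ≥ 1 real. Define m̃_m(Y) = ∑_{n ≤ Y, gcd(n,m)=1} (μ(n)/κ(n)) log(Y/n) and č_q(s) = ∑_{n ≤ s, gcd(n,q)=1} (μ(n)/n) log(s/n), with κ(n) = n∏_{p|n}(1+1/p). Define h_q(s) = ∑_{d ≥ 1, gcd(d,q)=1} (μ(d)/κ(d)²) (m̃_{dq}(s/d) - (π²/6)κ(dq)/(dq))². Then ∑_{d ≥ 1, gcd(d,q)=1} (μ(d)/κ(d)²) m̃_{dq}(s/d)² = h_q(s) + (π²κ(q)/(3q)) č_q(s) - π²κ(q)/(6φ(q)). -/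
/-!
Write `c_d = μ(d)/κ(d)²`, `A_d = m̃_{dq}(s/d)` and `B_d = (π²/6) κ(dq)/(dq)`, so that
`c A² = c (A - B)² + 2 c A B - c B²`. Only `d ≤ s` contribute to the series containing `A`.
Grouping the terms of `∑ c_d A_d B_d` by `m = d n` and using
`∑_{d n = m, (d,n) = 1} μ(d) μ(n) / (d κ(d) κ(n)) = μ(m)/m` turns it into `(π²/6)(κ(q)/q) č_q(s)`.
Since `κ(dq) = κ(d) κ(q)`, the series `∑ c_d B_d²` is `(π²/6)² (κ(q)/q)² ∑_{(d,q)=1} μ(d)/d²`, and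
`∑_{(d,q)=1} μ(d)/d²` is the inverse of the L-series of the trivial character mod `q` at `2`,
namely `ζ(2) ∏_{p ∣ q} (1 - p⁻²)`.
-/

open ArithmeticFunction
open scoped ArithmeticFunction.sigma

lemma tsum_mul_sq_eq_tsum_mul_sub_sq {ι : Type*} {c a b : ι → ℝ}
    (ha : Summable fun i => c i * a i ^ 2) (hab : Summable fun i => c i * a i * b i)
    (hb : Summable fun i => c i * b i ^ 2) :
    ∑' i, c i * a i ^ 2 =
      ∑' i, c i * (a i - b i) ^ 2 + 2 * ∑' i, c i * a i * b i - ∑' i, c i * b i ^ 2 := by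
  have hexpand : ∑' i, c i * (a i - b i) ^ 2 =
      ∑' i, (c i * a i ^ 2 - 2 * (c i * a i * b i) + c i * b i ^ 2) :=
    tsum_congr fun i => by ring
  rw [hexpand, (ha.sub (hab.mul_left 2)).tsum_add hb, ha.tsum_sub (hab.mul_left 2), tsum_mul_left]
  ring

lemma sum_Icc_sum_divisorsAntidiagonal {M : Type*} [AddCommMonoid M] (N : ℕ) (F : ℕ → ℕ → M) :
    ∑ m ∈ Finset.Icc 1 N, ∑ x ∈ m.divisorsAntidiagonal, F x.1 x.2 =
      ∑ d ∈ Finset.Icc 1 N, ∑ n ∈ Finset.Icc 1 (N / d), F d n := by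
  rw [Finset.sum_sigma', Finset.sum_sigma']
  refine Finset.sum_nbij' (fun x => ⟨x.2.1, x.2.2⟩) (fun x => ⟨x.1 * x.2, (x.1, x.2)⟩)
    ?_ ?_ ?_ ?_ ?_
  · rintro ⟨m, d, n⟩ hx
    simp only [Finset.mem_sigma, Finset.mem_Icc, Nat.mem_divisorsAntidiagonal] at hx ⊢
    obtain ⟨⟨hdn, hdnN⟩, rfl, -⟩ := hx
    have hd := Nat.pos_of_mul_pos_right hdn
    have hn := Nat.pos_of_mul_pos_left hdn
    refine ⟨⟨hd, le_trans (Nat.le_mul_of_pos_right d hn) hdnN⟩, hn, ?_⟩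
    exact (Nat.le_div_iff_mul_le hd).mpr (by linarith [Nat.mul_comm d n])
  · rintro ⟨d, n⟩ hx
    simp only [Finset.mem_sigma, Finset.mem_Icc, Nat.mem_divisorsAntidiagonal] at hx ⊢
    obtain ⟨⟨hd, -⟩, hn, hnN⟩ := hx
    have := (Nat.le_div_iff_mul_le hd).mp hnN
    refine ⟨⟨Nat.mul_pos hd hn, by linarith [Nat.mul_comm d n]⟩, trivial, by positivity⟩
  · rintro ⟨m, d, n⟩ hx
    simp only [Finset.mem_sigma, Nat.mem_divisorsAntidiagonal] at hx
    obtain ⟨-, rfl, -⟩ := hx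
    rfl
  · rintro ⟨d, n⟩ -
    rfl
  · rintro ⟨m, d, n⟩ -
    rfl

/-- `κ(n) = n ∏_{p | n} (1 + 1/p)`. -/
noncomputable def kappa (n : ℕ) : ℝ :=
  n * ∏ p ∈ n.primeFactors, (1 + 1 / (p : ℝ))

lemma kappa_pos {n : ℕ} (hn : n ≠ 0) : 0 < kappa n := by
  unfold kappa
  positivity

lemma kappa_mul_of_coprime {m n : ℕ} (h : m.Coprime n) : kappa (m * n) = kappa m * kappa n := by
  rw [kappa, kappa, kappa, h.primeFactors_mul, Finset.prod_union h.disjoint_primeFactors]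
  push_cast
  ring

lemma kappa_eq_sigma_one_of_squarefree {n : ℕ} (hn : Squarefree n) : kappa n = σ 1 n := by
  have h := isMultiplicative_id.prodPrimeFactors_one_add_of_squarefree hn
  simp only [id_apply] at h
  have hprod : (n : ℝ) = ∏ p ∈ n.primeFactors, (p : ℝ) := by
    rw [← Nat.cast_prod, Nat.prod_primeFactors_of_squarefree hn]
  rw [kappa, sigma_one_apply, ← h, hprod, ← Finset.prod_mul_distrib]
  push_cast
  refine Finset.prod_congr rfl fun p hp => ?_
  have : (p : ℝ) ≠ 0 := by exact_mod_cast (Nat.prime_of_mem_primeFactors hp).ne_zero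
  field_simp
  ring

lemma totient_mul_kappa (n : ℕ) :
    n.totient * kappa n = (n : ℝ) ^ 2 * ∏ p ∈ n.primeFactors, (1 - 1 / (p : ℝ) ^ 2) := by
  have h := Nat.totient_eq_mul_prod_factors n
  rw [kappa, show ((n.totient : ℕ) : ℝ) = ((n.totient : ℚ) : ℝ) by norm_cast, h]
  push_cast
  rw [mul_mul_mul_comm, ← Finset.prod_mul_distrib]
  congr 1
  · ring
  · refine Finset.prod_congr rfl fun p _ => ?_
    ring

lemma sum_divisorsAntidiagonal_coprime_moebius_div_kappa {m : ℕ} (hm : m ≠ 0) :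
    ∑ x ∈ m.divisorsAntidiagonal,
        (if x.1.Coprime x.2 then
          (moebius x.1 : ℝ) / (x.1 * kappa x.1) * ((moebius x.2 : ℝ) / kappa x.2) else 0) =
      (moebius m : ℝ) / m := by
  have hterm : ∀ x ∈ m.divisorsAntidiagonal,
      (if x.1.Coprime x.2 then
        (moebius x.1 : ℝ) / (x.1 * kappa x.1) * ((moebius x.2 : ℝ) / kappa x.2) else 0) =
        (moebius m : ℝ) / (m * kappa m) * (if x.1.Coprime x.2 then (x.2 : ℝ) else 0) := by
    rintro ⟨d, n⟩ hx
    obtain ⟨rfl, -⟩ := Nat.mem_divisorsAntidiagonal.mp hx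
    split_ifs with hdn
    · obtain ⟨hd, hn⟩ := mul_ne_zero_iff.mp hm
      rw [kappa_mul_of_coprime hdn, isMultiplicative_moebius.map_mul_of_coprime hdn]
      have := kappa_pos hd
      have := kappa_pos hn
      push_cast
      field_simp
    · rw [mul_zero]
  rw [Finset.sum_congr rfl hterm, ← Finset.mul_sum]
  by_cases hμ : moebius m = 0
  · simp [hμ]
  have hsq : Squarefree m := moebius_ne_zero_iff_squarefree.mp hμ
  have hcop : ∀ x ∈ m.divisorsAntidiagonal, x.1.Coprime x.2 := by
    rintro ⟨d, n⟩ hx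
    obtain ⟨rfl, -⟩ := Nat.mem_divisorsAntidiagonal.mp hx
    exact (Nat.squarefree_mul_iff.mp hsq).1
  rw [Finset.sum_congr rfl fun x hx => if_pos (hcop x hx),
    Nat.sum_divisorsAntidiagonal' (fun _ n => (n : ℝ)), ← Nat.cast_sum, ← sigma_one_apply,
    ← kappa_eq_sigma_one_of_squarefree hsq]
  have := kappa_pos hm
  field_simp

/-- `m̃_m(Y) = ∑_{n ≤ Y, (n,m)=1} (μ(n)/κ(n)) log(Y/n)`. -/
noncomputable def mtilde (m : ℕ) (Y : ℝ) : ℝ :=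
  ∑ n ∈ (Finset.Icc 1 ⌊Y⌋₊).filter (fun n => Nat.gcd n m = 1),
    ((moebius n : ℝ) / kappa n) * Real.log (Y / n)

/-- `č_q(s) = ∑_{n ≤ s, (n,q)=1} (μ(n)/n) log(s/n)`. -/
noncomputable def mcheck (q : ℕ) (s : ℝ) : ℝ :=
  ∑ n ∈ (Finset.Icc 1 ⌊s⌋₊).filter (fun n => Nat.gcd n q = 1),
    ((moebius n : ℝ) / n) * Real.log (s / n)

lemma sum_moebius_div_mul_kappa_mul_mtilde (q : ℕ) (s : ℝ) :
    ∑ d ∈ (Finset.Icc 1 ⌊s⌋₊).filter (fun d => d.gcd q = 1),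
        (moebius d : ℝ) / (d * kappa d) * mtilde (d * q) (s / d) = mcheck q s := by
  set F : ℕ → ℕ → ℝ := fun d n => if d.gcd q = 1 ∧ n.gcd (d * q) = 1 then
    (moebius d : ℝ) / (d * kappa d) * ((moebius n : ℝ) / kappa n * Real.log (s / d / n)) else 0
  have hlhs : ∑ d ∈ (Finset.Icc 1 ⌊s⌋₊).filter (fun d => d.gcd q = 1),
      (moebius d : ℝ) / (d * kappa d) * mtilde (d * q) (s / d) =
        ∑ d ∈ Finset.Icc 1 ⌊s⌋₊, ∑ n ∈ Finset.Icc 1 (⌊s⌋₊ / d), F d n := by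
    rw [Finset.sum_filter]
    refine Finset.sum_congr rfl fun d _ => ?_
    simp only [F, mtilde, Nat.floor_div_natCast, Finset.sum_filter, Finset.mul_sum, ite_and]
    split_ifs <;> simp [mul_ite]
  have hrhs : mcheck q s = ∑ m ∈ Finset.Icc 1 ⌊s⌋₊, ∑ x ∈ m.divisorsAntidiagonal, F x.1 x.2 := by
    rw [mcheck, Finset.sum_filter]
    refine Finset.sum_congr rfl fun m hm => ?_
    have hm0 : m ≠ 0 := Nat.one_le_iff_ne_zero.mp (Finset.mem_Icc.mp hm).1
    have hF : ∀ x ∈ m.divisorsAntidiagonal, F x.1 x.2 = if m.gcd q = 1 ∧ x.1.Coprime x.2 then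
        (moebius x.1 : ℝ) / (x.1 * kappa x.1) * ((moebius x.2 : ℝ) / kappa x.2) *
          Real.log (s / m) else 0 := by
      rintro ⟨d, n⟩ hx
      obtain ⟨rfl, -⟩ := Nat.mem_divisorsAntidiagonal.mp hx
      have hiff : d.gcd q = 1 ∧ n.gcd (d * q) = 1 ↔ (d * n).gcd q = 1 ∧ d.Coprime n := by
        simp only [← Nat.coprime_iff_gcd_eq_one, Nat.coprime_mul_iff_left,
          Nat.coprime_mul_iff_right, Nat.coprime_comm (m := n)]
        tauto
      refine if_congr hiff ?_ rfl
      rw [Nat.cast_mul, div_div]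
      ring
    rw [Finset.sum_congr rfl hF]
    by_cases hmq : m.gcd q = 1
    · simp only [hmq, true_and, if_true]
      rw [← sum_divisorsAntidiagonal_coprime_moebius_div_kappa hm0, Finset.sum_mul]
      simp only [ite_zero_mul]
    · simp [hmq]
  rw [hlhs, hrhs, sum_Icc_sum_divisorsAntidiagonal]

lemma mtilde_div_eq_zero {m d : ℕ} {s : ℝ} (hd : ⌊s⌋₊ < d) : mtilde m (s / d) = 0 := by
  rw [mtilde, Nat.floor_div_natCast, Nat.div_eq_of_lt hd]
  rfl

/-- `h_q(s) = ∑_{d ≥ 1, (d,q)=1} (μ(d)/κ(d)²) (m̃_{dq}(s/d) - (π²/6)κ(dq)/(dq))²`. -/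
noncomputable def hq (q : ℕ) (s : ℝ) : ℝ :=
  ∑' d : {d : ℕ // 0 < d ∧ Nat.gcd d q = 1},
    ((moebius (d : ℕ) : ℝ) / kappa (d : ℕ) ^ 2) *
      (mtilde ((d : ℕ) * q) (s / (d : ℕ)) -
        (Real.pi ^ 2 / 6) * kappa ((d : ℕ) * q) / ((d : ℕ) * q)) ^ 2

lemma hasSum_coprime_of_eq_zero {q N : ℕ} {f : ℕ → ℝ} (hf : ∀ d, N < d → f d = 0) :
    HasSum (fun d : {d : ℕ // 0 < d ∧ d.gcd q = 1} => f d)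
      (∑ d ∈ (Finset.Icc 1 N).filter (fun d => d.gcd q = 1), f d) := by
  have hsupp : ∀ d ∉ Finset.Icc 1 N, {d : ℕ | 0 < d ∧ d.gcd q = 1}.indicator f d = 0 := by
    intro d hd
    rcases Nat.eq_zero_or_pos d with rfl | hd0
    · exact Set.indicator_of_notMem (fun h => h.1.false) f
    · have hNd : N < d := by
        simp only [Finset.mem_Icc, not_and, not_le] at hd
        exact hd hd0
      simp [hf d hNd]
  have hval : ∑ d ∈ Finset.Icc 1 N, {d : ℕ | 0 < d ∧ d.gcd q = 1}.indicator f d =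
      ∑ d ∈ (Finset.Icc 1 N).filter (fun d => d.gcd q = 1), f d := by
    rw [Finset.sum_filter]
    refine Finset.sum_congr rfl fun d hd => ?_
    have hd0 : 0 < d := (Finset.mem_Icc.mp hd).1
    simp [Set.indicator_apply, hd0]
  exact hval ▸ hasSum_subtype_iff_indicator.mpr (hasSum_sum_of_ne_finset_zero hsupp)

lemma tsum_coprime_moebius_div_sq_mul {q : ℕ} (hq₀ : q ≠ 0) :
    (∑' d : {d : ℕ // 0 < d ∧ d.gcd q = 1}, (moebius d : ℝ) / (d : ℝ) ^ 2) *
      (Real.pi ^ 2 / 6 * ∏ p ∈ q.primeFactors, (1 - 1 / (p : ℝ) ^ 2)) = 1 := by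
  have : NeZero q := ⟨hq₀⟩
  have h2 : 1 < (2 : ℂ).re := by norm_num
  have hχ : LSeries (fun n : ℕ => (1 : DirichletCharacter ℂ q) n) 2 =
      ((Real.pi ^ 2 / 6 * ∏ p ∈ q.primeFactors, (1 - 1 / (p : ℝ) ^ 2) : ℝ) : ℂ) := by
    rw [← DirichletCharacter.LFunction_eq_LSeries _ h2]
    refine (DirichletCharacter.LFunctionTrivChar_eq_mul_riemannZeta (N := q) (s := 2)
      (by norm_num)).trans ?_
    rw [riemannZeta_two]
    push_cast
    rw [mul_comm]
    simp [Complex.cpow_neg]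
  have hχμ : LSeries ((fun n : ℕ => (1 : DirichletCharacter ℂ q) n) * fun n => (moebius n : ℂ)) 2 =
      ((∑' d : {d : ℕ // 0 < d ∧ d.gcd q = 1}, (moebius d : ℝ) / (d : ℝ) ^ 2 : ℝ) : ℂ) := by
    have hsub : ∑' d : {d : ℕ // 0 < d ∧ d.gcd q = 1}, (moebius d : ℝ) / (d : ℝ) ^ 2 =
        ∑' n, {d : ℕ | 0 < d ∧ d.gcd q = 1}.indicator (fun n => (moebius n : ℝ) / (n : ℝ) ^ 2) n :=
      tsum_subtype {d : ℕ | 0 < d ∧ d.gcd q = 1} fun n => (moebius n : ℝ) / (n : ℝ) ^ 2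
    rw [hsub, Complex.ofReal_tsum, LSeries]
    refine tsum_congr fun n => ?_
    rcases eq_or_ne n 0 with rfl | hn
    · simp
    rw [LSeries.term_of_ne_zero hn, Pi.mul_apply]
    by_cases hcop : n.gcd q = 1
    · rw [Set.indicator_of_mem (show n ∈ {d : ℕ | 0 < d ∧ d.gcd q = 1} from ⟨by omega, hcop⟩),
        MulChar.one_apply ((ZMod.isUnit_iff_coprime n q).mpr hcop)]
      simp
    · rw [Set.indicator_of_notMem (fun h => hcop h.2),
        MulChar.map_nonunit _ (fun h => hcop ((ZMod.isUnit_iff_coprime n q).mp h))]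
      simp
  have h := DirichletCharacter.LSeries.mul_mu_eq_one (1 : DirichletCharacter ℂ q) h2
  rw [hχ, hχμ, mul_comm] at h
  exact_mod_cast h

lemma summable_coprime_moebius_div_sq (q : ℕ) :
    Summable fun d : {d : ℕ // 0 < d ∧ d.gcd q = 1} => (moebius d : ℝ) / (d : ℝ) ^ 2 := by
  refine .of_norm_bounded
    ((Real.summable_one_div_nat_pow.mpr one_lt_two).comp_injective Subtype.val_injective)
    fun d => ?_
  rw [Real.norm_eq_abs, abs_div, abs_pow, Nat.abs_cast, Function.comp_apply]
  gcongr
  exact_mod_cast abs_moebius_le_one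

lemma hasSum_moebius_div_kappa_sq_mul_sq {q : ℕ} (hq₀ : q ≠ 0) :
    HasSum (fun d : {d : ℕ // 0 < d ∧ d.gcd q = 1} => (moebius d : ℝ) / kappa d ^ 2 *
        (Real.pi ^ 2 / 6 * kappa (d * q) / (d * q)) ^ 2)
      (Real.pi ^ 2 * kappa q / (6 * q.totient)) := by
  have hterm : ∀ d : {d : ℕ // 0 < d ∧ d.gcd q = 1}, (moebius d : ℝ) / kappa d ^ 2 *
      (Real.pi ^ 2 / 6 * kappa (d * q) / (d * q)) ^ 2 =
        (Real.pi ^ 2 / 6 * kappa q / q) ^ 2 * ((moebius d : ℝ) / (d : ℝ) ^ 2) := by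
    intro ⟨d, hd0, hdq⟩
    have := kappa_pos hd0.ne'
    have : (d : ℝ) ≠ 0 := by exact_mod_cast hd0.ne'
    rw [kappa_mul_of_coprime hdq]
    field_simp
  have hS := tsum_coprime_moebius_div_sq_mul hq₀
  set S := ∑' d : {d : ℕ // 0 < d ∧ d.gcd q = 1}, (moebius d : ℝ) / (d : ℝ) ^ 2
  have hφκ := totient_mul_kappa q
  have hφ : (q.totient : ℝ) ≠ 0 := by exact_mod_cast Nat.totient_eq_zero.not.mpr hq₀
  have hκ := kappa_pos hq₀
  have hq_ne : (q : ℝ) ≠ 0 := by exact_mod_cast hq₀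
  have hval : (Real.pi ^ 2 / 6 * kappa q / q) ^ 2 * S =
        Real.pi ^ 2 * kappa q / (6 * q.totient) := by
    field_simp
    linear_combination Real.pi ^ 2 * S * hφκ + 6 * (q : ℝ) ^ 2 * hS
  simp_rw [hterm]
  rw [← hval]
  exact (summable_coprime_moebius_div_sq q).hasSum.mul_left _

theorem stmt_15_general (q : ℕ) (hq' : 0 < q) (s : ℝ) :
    ∑' d : {d : ℕ // 0 < d ∧ Nat.gcd d q = 1},
        ((moebius (d : ℕ) : ℝ) / kappa (d : ℕ) ^ 2) * mtilde ((d : ℕ) * q) (s / (d : ℕ)) ^ 2 =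
      hq q s + (Real.pi ^ 2 * kappa q / (3 * q)) * mcheck q s -
        Real.pi ^ 2 * kappa q / (6 * q.totient) := by
  set c : ℕ → ℝ := fun d => (moebius d : ℝ) / kappa d ^ 2
  set A : ℕ → ℝ := fun d => mtilde (d * q) (s / d)
  set B : ℕ → ℝ := fun d => Real.pi ^ 2 / 6 * kappa (d * q) / (d * q)
  have hA2 := hasSum_coprime_of_eq_zero (q := q) (N := ⌊s⌋₊) (f := fun d => c d * A d ^ 2)
    fun d hd => by simp [A, mtilde_div_eq_zero hd]
  have hAB := hasSum_coprime_of_eq_zero (q := q) (N := ⌊s⌋₊) (f := fun d => c d * A d * B d)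
    fun d hd => by simp [A, mtilde_div_eq_zero hd]
  have hB2 := hasSum_moebius_div_kappa_sq_mul_sq hq'.ne'
  have hAB_val : ∑ d ∈ (Finset.Icc 1 ⌊s⌋₊).filter (fun d => d.gcd q = 1), c d * A d * B d =
      Real.pi ^ 2 / 6 * (kappa q / q) * mcheck q s := by
    rw [← sum_moebius_div_mul_kappa_mul_mtilde, Finset.mul_sum]
    refine Finset.sum_congr rfl fun d hd => ?_
    obtain ⟨hd, hdq⟩ := Finset.mem_filter.mp hd
    have hd0 : d ≠ 0 := Nat.one_le_iff_ne_zero.mp (Finset.mem_Icc.mp hd).1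
    have := kappa_pos hd0
    have : (d : ℝ) ≠ 0 := by exact_mod_cast hd0
    have := kappa_pos hq'.ne'
    have : (q : ℝ) ≠ 0 := by exact_mod_cast hq'.ne'
    simp only [c, A, B, kappa_mul_of_coprime hdq]
    field_simp
  rw [hq, tsum_mul_sq_eq_tsum_mul_sub_sq (c := fun d : {d : ℕ // 0 < d ∧ d.gcd q = 1} => c d)
    (a := fun d => A d) (b := fun d => B d) hA2.summable hAB.summable hB2.summable,
    hAB.tsum_eq, hAB_val, hB2.tsum_eq]
  ring

theorem stmt_15 (q : ℕ) (hq' : 0 < q) (s : ℝ) (hs : 1 ≤ s) :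
    ∑' d : {d : ℕ // 0 < d ∧ Nat.gcd d q = 1},
        ((moebius (d : ℕ) : ℝ) / kappa (d : ℕ) ^ 2) * mtilde ((d : ℕ) * q) (s / (d : ℕ)) ^ 2 =
      hq q s + (Real.pi ^ 2 * kappa q / (3 * q)) * mcheck q s -
        Real.pi ^ 2 * kappa q / (6 * q.totient) :=
  stmt_15_general q hq' s
end
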